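/- If n ≥ 2 and a league outcome with n teams is tied with common score 3n−4, then every team has exactly n−2 victories, 2 draws, and n−2 defeats among its 2(n−1) matches. -/

import Mathlib

/-!
A team's score is `3 w + d`, so a score of `3n − 4 ≡ 2 (mod 3)` forces at least two draws per
team. On the other hand every match hands out 3 points, or only 2 if drawn; summing over the
matches of each team and then over all teams, the draws total exactly `2n` when every team scores
`3n − 4`. Hence every team has exactly two draws, `n − 2` wins, and the remaining `n − 2` matches
are defeats.
-/

open Finset

inductive MatchResult : Type
  | homeWin : MatchResult
  | draw : MatchResult
  | awayWin : MatchResult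
  deriving DecidableEq

instance instFintypeMatchResult : Fintype MatchResult where
  elems := {MatchResult.homeWin, MatchResult.draw, MatchResult.awayWin}
  complete := by intro x; cases x <;> simp

/-- A league outcome: a result for each ordered pair of distinct teams
(the first component is the home team). -/
abbrev LeagueOutcome (n : ℕ) : Type :=
  {p : Fin n × Fin n // p.1 ≠ p.2} → MatchResult

/-- Points earned by the home team. -/
def homePts : MatchResult → ℕ
  | .homeWin => 3
  | .draw => 1
  | .awayWin => 0

/-- Points earned by the away team. -/
def awayPts : MatchResult → ℕ
  | .homeWin => 0
  | .draw => 1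
  | .awayWin => 3

/-- Total points of team `i`: sum over all matches of the points `i` earns in them. -/
def totalPoints {n : ℕ} (r : LeagueOutcome n) (i : Fin n) : ℕ :=
  ∑ m : {p : Fin n × Fin n // p.1 ≠ p.2},
    ((if m.val.1 = i then homePts (r m) else 0) +
     (if m.val.2 = i then awayPts (r m) else 0))

/-- Total points the other teams earn in their matches against team `i`. -/
def oppPoints {n : ℕ} (r : LeagueOutcome n) (i : Fin n) : ℕ :=
  ∑ m : {p : Fin n × Fin n // p.1 ≠ p.2},
    ((if m.val.1 = i then awayPts (r m) else 0) +
     (if m.val.2 = i then homePts (r m) else 0))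

/-- Number of matches that team `i` wins. -/
def wins {n : ℕ} (r : LeagueOutcome n) (i : Fin n) : ℕ :=
  (Finset.univ.filter (fun m : {p : Fin n × Fin n // p.1 ≠ p.2} =>
    (m.val.1 = i ∧ r m = .homeWin) ∨ (m.val.2 = i ∧ r m = .awayWin))).card

/-- Number of matches that team `i` draws. -/
def draws {n : ℕ} (r : LeagueOutcome n) (i : Fin n) : ℕ :=
  (Finset.univ.filter (fun m : {p : Fin n × Fin n // p.1 ≠ p.2} =>
    (m.val.1 = i ∨ m.val.2 = i) ∧ r m = .draw)).card

/-- Number of matches that team `i` loses. -/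
def losses {n : ℕ} (r : LeagueOutcome n) (i : Fin n) : ℕ :=
  (Finset.univ.filter (fun m : {p : Fin n × Fin n // p.1 ≠ p.2} =>
    (m.val.1 = i ∧ r m = .awayWin) ∨ (m.val.2 = i ∧ r m = .homeWin))).card

abbrev LeagueMatch (n : ℕ) := {p : Fin n × Fin n // p.1 ≠ p.2}

section Counting

variable {n : ℕ}

lemma card_filter_home_eq (i : Fin n) :
    #{m : LeagueMatch n | m.val.1 = i} = n - 1 := by
  rw [show n - 1 = #(univ.erase i) by simp]
  refine card_bij' (fun m _ => m.val.2)
    (fun j hj => ⟨(i, j), fun h => (mem_erase.mp hj).1 h.symm⟩) ?_ ?_ ?_ ?_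
  · intro m hm
    simp only [mem_filter, mem_univ, true_and] at hm
    exact mem_erase.mpr ⟨fun h => m.prop (hm.trans h.symm), mem_univ _⟩
  · simp
  · intro m hm
    simp only [mem_filter, mem_univ, true_and] at hm
    exact Subtype.ext (Prod.ext hm.symm rfl)
  · intro j _; rfl

lemma card_filter_away_eq (i : Fin n) :
    #{m : LeagueMatch n | m.val.2 = i} = n - 1 := by
  rw [← card_filter_home_eq i]
  refine card_bij' (fun m _ => ⟨m.val.swap, fun h => m.prop h.symm⟩)
    (fun m _ => ⟨m.val.swap, fun h => m.prop h.symm⟩) ?_ ?_ ?_ ?_ <;> simp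

lemma card_filter_involving_eq (i : Fin n) :
    #{m : LeagueMatch n | m.val.1 = i ∨ m.val.2 = i} = 2 * (n - 1) := by
  rw [filter_or, card_union_of_disjoint, card_filter_home_eq, card_filter_away_eq, two_mul]
  exact disjoint_filter.mpr fun m _ h₁ h₂ => m.prop (h₁.trans h₂.symm)

lemma LeagueMatch.home_away_cases (m : LeagueMatch n) (i : Fin n) :
    (m.val.1 = i ∧ m.val.2 ≠ i) ∨ (m.val.1 ≠ i ∧ m.val.2 = i) ∨ (m.val.1 ≠ i ∧ m.val.2 ≠ i) := by
  have := m.prop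
  grind

end Counting

section Points

variable {n : ℕ} (r : LeagueOutcome n) (i : Fin n)

lemma totalPoints_eq : totalPoints r i = 3 * wins r i + draws r i := by
  rw [totalPoints, wins, draws, card_filter, card_filter, mul_sum, ← sum_add_distrib]
  refine sum_congr rfl fun m _ => ?_
  rcases LeagueMatch.home_away_cases m i with ⟨h₁, h₂⟩ | ⟨h₁, h₂⟩ | ⟨h₁, h₂⟩ <;> cases r m <;>
    simp [h₁, h₂, homePts, awayPts]

lemma wins_add_draws_add_losses : wins r i + draws r i + losses r i = 2 * (n - 1) := by
  rw [← card_filter_involving_eq i, wins, draws, losses, card_filter, card_filter, card_filter,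
    card_filter, ← sum_add_distrib, ← sum_add_distrib]
  refine sum_congr rfl fun m _ => ?_
  rcases LeagueMatch.home_away_cases m i with ⟨h₁, h₂⟩ | ⟨h₁, h₂⟩ | ⟨h₁, h₂⟩ <;> cases r m <;>
    simp [h₁, h₂]

/-- Each of the `2 (n - 1)` matches of `i` distributes 3 points, or only 2 if drawn. -/
lemma totalPoints_add_oppPoints_add_draws :
    totalPoints r i + oppPoints r i + draws r i = 6 * (n - 1) := by
  rw [show 6 * (n - 1) = 3 * (2 * (n - 1)) by ring, ← card_filter_involving_eq i, totalPoints,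
    oppPoints, draws, card_filter, card_filter, mul_sum, ← sum_add_distrib, ← sum_add_distrib]
  refine sum_congr rfl fun m _ => ?_
  rcases LeagueMatch.home_away_cases m i with ⟨h₁, h₂⟩ | ⟨h₁, h₂⟩ | ⟨h₁, h₂⟩ <;> cases r m <;>
    simp [h₁, h₂, homePts, awayPts]

lemma sum_oppPoints : ∑ i, oppPoints r i = ∑ i, totalPoints r i := by
  simp only [oppPoints, totalPoints]
  rw [sum_comm]
  conv_rhs => rw [sum_comm]
  refine sum_congr rfl fun m _ => ?_
  simp only [sum_add_distrib, sum_ite_eq, mem_univ, if_true, add_comm]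

lemma two_mul_sum_totalPoints_add_sum_draws :
    2 * ∑ i, totalPoints r i + ∑ i, draws r i = n * (6 * (n - 1)) := by
  rw [two_mul]
  nth_rw 2 [← sum_oppPoints r]
  rw [← sum_add_distrib, ← sum_add_distrib,
    sum_congr rfl fun i _ => totalPoints_add_oppPoints_add_draws r i]
  simp

end Points

/-- in a league tied with common score `3n−4`, every team has exactly
`n−2` victories, 2 draws and `n−2` defeats. -/
theorem tied_three_n_sub_four (n : ℕ) (hn : 2 ≤ n) (r : LeagueOutcome n)
    (h : ∀ i, totalPoints r i = 3 * n - 4) :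
    ∀ i, wins r i = n - 2 ∧ draws r i = 2 ∧ losses r i = n - 2 := by
  have hscore (i : Fin n) : 3 * wins r i + draws r i = 3 * n - 4 := (totalPoints_eq r i) ▸ h i
  have hsum : ∑ _i : Fin n, 2 = ∑ i, draws r i := by
    have htotal := two_mul_sum_totalPoints_add_sum_draws r
    simp only [h, sum_const, card_univ, Fintype.card_fin, smul_eq_mul] at htotal ⊢
    obtain ⟨k, rfl⟩ := Nat.exists_eq_add_of_le' hn
    rw [show 3 * (k + 2) - 4 = 3 * k + 2 by omega, show k + 2 - 1 = k + 1 by omega] at htotal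
    linarith
  have htwo_le (i : Fin n) : 2 ≤ draws r i := by have := hscore i; omega
  have hdraws := (sum_eq_sum_iff_of_le fun i _ => htwo_le i).mp hsum
  intro i
  have := hdraws i (mem_univ i)
  have := hscore i
  have := wins_add_draws_add_losses r i
  omega
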